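/- For positive definite matrices A, B, the geometric mean equals the geometric mean of the arithmetic and harmonic means: A#B = ((A+B)/2) # (A!B). -/

import Mathlib

open Matrix
open scoped ComplexOrder

/-- Total matrix square root: the PSD square root on PSD matrices, `0` elsewhere. -/
noncomputable def msqrt {𝕜 : Type*} [RCLike 𝕜] {n : Type*} [Fintype n] [DecidableEq n]
    (A : Matrix n n 𝕜) : Matrix n n 𝕜 :=
  letI := Classical.dec A.PosSemidef
  if h : A.PosSemidef then
    (h.1.eigenvectorUnitary : Matrix n n 𝕜) * diagonal ((↑) ∘ (√·) ∘ h.1.eigenvalues) *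
      (star (h.1.eigenvectorUnitary : Matrix n n 𝕜)) else 0

/-- The matrix geometric mean `A # B = A^{1/2} (A^{-1/2} B A^{-1/2})^{1/2} A^{1/2}`. -/
noncomputable def geomMean {𝕜 : Type*} [RCLike 𝕜] {n : Type*} [Fintype n] [DecidableEq n]
    (A B : Matrix n n 𝕜) : Matrix n n 𝕜 :=
  msqrt A * msqrt ((msqrt A)⁻¹ * B * (msqrt A)⁻¹) * msqrt A

/-! `A # B` is the unique positive semidefinite solution `X` of the Riccati equation
`X A⁻¹ X = B`: conjugating by `A^{-1/2}` turns it into `(A^{-1/2} X A^{-1/2})² = A^{-1/2} B A^{-1/2}`.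
If `G A⁻¹ G = B`, inverting gives `G B⁻¹ G = A`, so `G (A⁻¹ + B⁻¹) G = A + B`; inverting once more,
`G ((A + B)/2)⁻¹ G = 2 (A⁻¹ + B⁻¹)⁻¹ = A ! B`, and uniqueness identifies `G = A # B` with
`((A + B)/2) # (A ! B)`. -/

section Conjugation

variable {α : Type*} [CommRing α] {m : Type*} [Fintype m] [DecidableEq m] {R : Matrix m m α}

lemma Matrix.conj_inv_conj (hR : IsUnit R) (X : Matrix m m α) :
    R * (R⁻¹ * X * R⁻¹) * R = X := by
  have hR := (isUnit_iff_isUnit_det R).mp hR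
  simp only [Matrix.mul_assoc, Matrix.mul_nonsing_inv_cancel_left _ _ hR,
    Matrix.nonsing_inv_mul _ hR, Matrix.mul_one]

lemma Matrix.conj_mul_inv_sq_mul_conj (hR : IsUnit R) (S T : Matrix m m α) :
    R * S * R * (R⁻¹ * R⁻¹) * (R * T * R) = R * (S * T) * R := by
  have hR := (isUnit_iff_isUnit_det R).mp hR
  simp only [Matrix.mul_assoc, Matrix.mul_nonsing_inv_cancel_left _ _ hR,
    Matrix.nonsing_inv_mul_cancel_left _ _ hR]

lemma Matrix.mul_inv_mul_eq_inv_of_mul_mul_eq {G M N : Matrix m m α} (hG : IsUnit G)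
    (h : G * M * G = N) : G * N⁻¹ * G = M⁻¹ := by
  rw [← h, Matrix.mul_inv_rev, Matrix.mul_inv_rev, ← Matrix.mul_assoc G⁻¹, conj_inv_conj hG]

end Conjugation

section Field

variable {K : Type*} [Field K] {m : Type*} [Fintype m] [DecidableEq m]

lemma Matrix.inv_smul_of_ne_zero {k : K} (hk : k ≠ 0) (M : Matrix m m K) :
    (k • M)⁻¹ = k⁻¹ • M⁻¹ := by
  by_cases hM : IsUnit M.det
  · exact inv_smul' M (Units.mk0 k hk) hM
  · have hkM : ¬IsUnit (k • M).det := by simpa [det_smul, hk] using hM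
    rw [nonsing_inv_apply_not_isUnit _ hM, nonsing_inv_apply_not_isUnit _ hkM, smul_zero]

lemma Matrix.mul_inv_arith_mul_eq_harm [NeZero (2 : K)] {G A B : Matrix m m K} (hG : IsUnit G)
    (hA : IsUnit A) (h : G * A⁻¹ * G = B) :
    G * ((2 : K)⁻¹ • (A + B))⁻¹ * G = (2 : K) • (A⁻¹ + B⁻¹)⁻¹ := by
  have hBA : G * B⁻¹ * G = A := by
    rw [mul_inv_mul_eq_inv_of_mul_mul_eq hG h,
      nonsing_inv_nonsing_inv _ ((isUnit_iff_isUnit_det A).mp hA)]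
  have hsum : G * ((2 : K)⁻¹ • (A⁻¹ + B⁻¹)) * G = (2 : K)⁻¹ • (A + B) := by
    rw [Matrix.mul_smul, Matrix.smul_mul, Matrix.mul_add, Matrix.add_mul, h, hBA, add_comm]
  rw [mul_inv_mul_eq_inv_of_mul_mul_eq hG hsum, inv_smul_of_ne_zero (inv_ne_zero two_ne_zero),
    inv_inv]

end Field

section GeomMean

open scoped MatrixOrder

variable {𝕜 : Type*} [RCLike 𝕜] {n : Type*} [Fintype n] [DecidableEq n] {A B X : Matrix n n 𝕜}

lemma msqrt_eq_cfcSqrt (A : Matrix n n 𝕜) : msqrt A = CFC.sqrt A := by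
  by_cases hA : A.PosSemidef
  · rw [msqrt, dif_pos hA, CFC.sqrt_eq_cfc, cfc_nnreal_eq_real _ A hA.nonneg, hA.1.cfc_eq,
      IsHermitian.cfc, Unitary.conjStarAlgAut_apply]
    congr 3
    funext i
    simp [hA.eigenvalues_nonneg i]
  · rw [msqrt, dif_neg hA, CFC.sqrt_of_not_nonneg (mt LE.le.posSemidef hA)]

lemma geomMean_eq_cfcSqrt (A B : Matrix n n 𝕜) :
    geomMean A B =
      CFC.sqrt A * CFC.sqrt ((CFC.sqrt A)⁻¹ * B * (CFC.sqrt A)⁻¹) * CFC.sqrt A := by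
  simp only [geomMean, msqrt_eq_cfcSqrt]

lemma Matrix.PosDef.cfcSqrt (hA : A.PosDef) : (CFC.sqrt A).PosDef :=
  hA.isStrictlyPositive.sqrt.posDef

lemma Matrix.PosSemidef.inv_eq_inv_cfcSqrt_mul_inv_cfcSqrt (hA : A.PosSemidef) :
    A⁻¹ = (CFC.sqrt A)⁻¹ * (CFC.sqrt A)⁻¹ := by
  rw [← Matrix.mul_inv_rev, CFC.sqrt_mul_sqrt_self A hA.nonneg]

lemma Matrix.PosSemidef.inv_cfcSqrt_mul_mul_inv_cfcSqrt (hB : B.PosSemidef) (A : Matrix n n 𝕜) :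
    ((CFC.sqrt A)⁻¹ * B * (CFC.sqrt A)⁻¹).PosSemidef := by
  simpa only [(CFC.sqrt_nonneg A).posSemidef.1.inv.eq] using
    hB.conjTranspose_mul_mul_same (CFC.sqrt A)⁻¹

lemma Matrix.PosDef.geomMean (hA : A.PosDef) (hB : B.PosDef) : (geomMean A B).PosDef := by
  have hR := hA.cfcSqrt
  have hC : ((CFC.sqrt A)⁻¹ * B * (CFC.sqrt A)⁻¹).PosDef := by
    simpa only [star_eq_conjTranspose, hR.1.inv.eq] using
      hR.inv.isUnit.posDef_star_left_conjugate_iff.mpr hB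
  rw [geomMean_eq_cfcSqrt]
  simpa only [star_eq_conjTranspose, hR.1.eq] using
    hR.isUnit.posDef_star_left_conjugate_iff.mpr hC.cfcSqrt

lemma geomMean_mul_inv_mul_geomMean (hA : A.PosDef) (hB : B.PosSemidef) :
    geomMean A B * A⁻¹ * geomMean A B = B := by
  have hR := hA.cfcSqrt.isUnit
  rw [geomMean_eq_cfcSqrt, hA.posSemidef.inv_eq_inv_cfcSqrt_mul_inv_cfcSqrt,
    conj_mul_inv_sq_mul_conj hR,
    CFC.sqrt_mul_sqrt_self _ (hB.inv_cfcSqrt_mul_mul_inv_cfcSqrt A).nonneg, conj_inv_conj hR]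

lemma geomMean_eq_of_mul_inv_mul_eq (hA : A.PosDef) (hX : X.PosSemidef)
    (h : X * A⁻¹ * X = B) : geomMean A B = X := by
  have hR := hA.cfcSqrt.isUnit
  have hAinv := hA.posSemidef.inv_eq_inv_cfcSqrt_mul_inv_cfcSqrt
  set R := CFC.sqrt A
  have hTT : (R⁻¹ * X * R⁻¹) * (R⁻¹ * X * R⁻¹) = R⁻¹ * B * R⁻¹ := by
    simp only [← h, hAinv, Matrix.mul_assoc]
  rw [geomMean_eq_cfcSqrt, CFC.sqrt_unique hTT (hX.inv_cfcSqrt_mul_mul_inv_cfcSqrt A).nonneg,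
    conj_inv_conj hR]

end GeomMean

/-- The geometric mean equals the geometric mean of the arithmetic and harmonic means:
`A # B = ((A+B)/2) # (A ! B)`. -/
theorem geomMean_eq_geomMean_arith_harm (n : ℕ) (A B : Matrix (Fin n) (Fin n) ℂ)
    (hA : A.PosDef) (hB : B.PosDef) :
    geomMean A B = geomMean ((2 : ℂ)⁻¹ • (A + B)) ((2 : ℂ) • (A⁻¹ + B⁻¹)⁻¹) := by
  have hG := hA.geomMean hB
  have hArith : ((2 : ℂ)⁻¹ • (A + B)).PosDef := (hA.add hB).smul (by norm_num)
  have hRiccati := geomMean_mul_inv_mul_geomMean hA hB.posSemidef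
  exact (geomMean_eq_of_mul_inv_mul_eq hArith hG.posSemidef
    (mul_inv_arith_mul_eq_harm hG.isUnit hA.isUnit hRiccati)).symm
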